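/- If ξ is a parallel unit vector field, then the Weyl projective curvature tensor of the projective semi-symmetric connection coincides with the Weyl projective curvature tensor of the Levi-Civita connection: g(P̃(X,Y)Z,U) = g(P(X,Y)Z,U) for all vector fields X, Y, Z, U. -/

import Mathlib

/-- Abstract setup for an `n`-dimensional Riemannian manifold: `C` plays the role of the
ring of smooth functions (an `ℝ`-algebra), `V` the `C`-module of vector fields, `D` the
directional derivative of functions, `bracket` the Lie bracket, `g` the (symmetric) Riemannian
metric, `nabla` the Levi-Civita connection (torsion free and metric compatible), and `xi`
a distinguished unit vector field. -/
structure GeomSetup (n : ℕ) (C : Type*) (V : Type*) [CommRing C] [Algebra ℝ C]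
    [AddCommGroup V] [Module C V] where
  D : V → C → C
  D_add : ∀ X f₁ f₂, D X (f₁ + f₂) = D X f₁ + D X f₂
  D_mul : ∀ X f₁ f₂, D X (f₁ * f₂) = f₁ * D X f₂ + f₂ * D X f₁
  D_addX : ∀ X Y f, D (X + Y) f = D X f + D Y f
  D_smulX : ∀ (f : C) X h, D (f • X) h = f * D X h
  D_const : ∀ X (r : ℝ), D X (algebraMap ℝ C r) = 0
  g : V → V → C
  g_symm : ∀ X Y, g X Y = g Y X
  g_add_left : ∀ X Y Z, g (X + Y) Z = g X Z + g Y Z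
  g_smul_left : ∀ (f : C) X Y, g (f • X) Y = f * g X Y
  nabla : V → V → V
  nabla_add_left : ∀ X Y Z, nabla (X + Y) Z = nabla X Z + nabla Y Z
  nabla_smul_left : ∀ (f : C) X Y, nabla (f • X) Y = f • nabla X Y
  nabla_add_right : ∀ X Y Z, nabla X (Y + Z) = nabla X Y + nabla X Z
  nabla_leibniz : ∀ X (f : C) Y, nabla X (f • Y) = f • nabla X Y + D X f • Y
  bracket : V → V → V
  bracket_eq : ∀ X Y, bracket X Y = nabla X Y - nabla Y X
  compat : ∀ X Y Z, D X (g Y Z) = g (nabla X Y) Z + g Y (nabla X Z)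
  xi : V
  xi_unit : g xi xi = 1

namespace GeomSetup

variable {n : ℕ} {C V : Type*} [CommRing C] [Algebra ℝ C] [AddCommGroup V] [Module C V]

/-- The 1-form `π(X) = g(X, ξ)`. -/
noncomputable def pi1 (s : GeomSetup n C V) (X : V) : C := s.g X s.xi

/-- The 1-form `φ = (1/2) π`. -/
noncomputable def phi (s : GeomSetup n C V) (X : V) : C :=
  algebraMap ℝ C (1 / 2) * s.pi1 X

/-- The 1-form `ψ = ((n-1)/(2(n+1))) π`. -/
noncomputable def psi (s : GeomSetup n C V) (X : V) : C :=
  algebraMap ℝ C (((n : ℝ) - 1) / (2 * ((n : ℝ) + 1))) * s.pi1 X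

/-- The projective semi-symmetric connection
`∇̃_X Y = ∇_X Y + ψ(Y)X + ψ(X)Y + φ(Y)X − φ(X)Y`. -/
noncomputable def tnabla (s : GeomSetup n C V) (X Y : V) : V :=
  s.nabla X Y + s.psi Y • X + s.psi X • Y + s.phi Y • X - s.phi X • Y

/-- The curvature tensor of a connection `nb`:
`R(X,Y)Z = nb_X nb_Y Z − nb_Y nb_X Z − nb_[X,Y] Z`. -/
noncomputable def curv (s : GeomSetup n C V) (nb : V → V → V) (X Y Z : V) : V :=
  nb X (nb Y Z) - nb Y (nb X Z) - nb (s.bracket X Y) Z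

/-- The scalar `λ = −n²/(n+1)²` (as an element of `C`). -/
noncomputable def lam (s : GeomSetup n C V) : C :=
  algebraMap ℝ C (-(n : ℝ) ^ 2 / ((n : ℝ) + 1) ^ 2)

/-- The covariant derivative `(nb_X R)(Y,Z)U` of the curvature tensor of `nb`. -/
noncomputable def covDerCurv (s : GeomSetup n C V) (nb : V → V → V) (X Y Z U : V) : V :=
  nb X (s.curv nb Y Z U) - s.curv nb (nb X Y) Z U - s.curv nb Y (nb X Z) U
    - s.curv nb Y Z (nb X U)

/-- The Ricci tensor (trace of `X ↦ R(X,Y)Z`) of the connection `nb`, computed with respect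
to an orthonormal frame `e`. -/
noncomputable def Ric (s : GeomSetup n C V) (e : Fin n → V) (nb : V → V → V) (Y Z : V) : C :=
  ∑ i, s.g (s.curv nb (e i) Y Z) (e i)

/-- The scalar curvature of the connection `nb` with respect to an orthonormal frame `e`. -/
noncomputable def scal (s : GeomSetup n C V) (e : Fin n → V) (nb : V → V → V) : C :=
  ∑ i, s.Ric e nb (e i) (e i)

end GeomSetup

namespace GeomSetup

variable {n : ℕ} {C V : Type*} [CommRing C] [Algebra ℝ C] [AddCommGroup V] [Module C V]

variable (s : GeomSetup n C V)

lemma g_zero_left (W : V) : s.g 0 W = 0 := by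
  have h := s.g_add_left 0 0 W
  rw [add_zero] at h
  exact (add_eq_left.mp h.symm)

lemma g_zero_right (W : V) : s.g W 0 = 0 := by rw [s.g_symm, s.g_zero_left]

lemma g_sub_left (X Y Z : V) : s.g (X - Y) Z = s.g X Z - s.g Y Z := by
  have h := s.g_add_left (X - Y) Y Z
  rw [sub_add_cancel] at h
  rw [h]; ring

lemma nabla_sub_left (X Y Z : V) : s.nabla (X - Y) Z = s.nabla X Z - s.nabla Y Z := by
  have h := s.nabla_add_left (X - Y) Y Z
  rw [sub_add_cancel] at h
  rw [h]; abel

lemma pi1_add (X Y : V) : s.pi1 (X + Y) = s.pi1 X + s.pi1 Y := s.g_add_left X Y s.xi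

lemma pi1_sub (X Y : V) : s.pi1 (X - Y) = s.pi1 X - s.pi1 Y := s.g_sub_left X Y s.xi

lemma pi1_smul (f : C) (X : V) : s.pi1 (f • X) = f * s.pi1 X := s.g_smul_left f X s.xi

lemma D_constmul (X : V) (r : ℝ) (f : C) :
    s.D X (algebraMap ℝ C r * f) = algebraMap ℝ C r * s.D X f := by
  rw [s.D_mul, s.D_const, mul_zero, add_zero]

lemma D_pi1 (hpar : ∀ X : V, s.nabla X s.xi = 0) (X Y : V) :
    s.D X (s.pi1 Y) = s.pi1 (s.nabla X Y) := by
  show s.D X (s.g Y s.xi) = _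
  rw [s.compat, hpar, s.g_zero_right, add_zero]; rfl

lemma curv_nb (hpar : ∀ X : V, s.nabla X s.xi = 0) (a b : ℝ)
    (nb : V → V → V)
    (hnb : ∀ X Y, nb X Y = s.nabla X Y + (algebraMap ℝ C a * s.pi1 Y) • X
        + (algebraMap ℝ C b * s.pi1 X) • Y) (X Y Z : V) :
    s.curv nb X Y Z = s.curv s.nabla X Y Z
      + ((algebraMap ℝ C a * algebraMap ℝ C a) * (s.pi1 Y * s.pi1 Z)) • X
      - ((algebraMap ℝ C a * algebraMap ℝ C a) * (s.pi1 X * s.pi1 Z)) • Y := by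
  simp only [curv, hnb, s.bracket_eq, s.nabla_add_right, s.nabla_leibniz, s.nabla_sub_left,
    s.pi1_add, s.pi1_smul, s.pi1_sub, s.D_constmul, s.D_pi1 hpar]
  module

lemma tnabla_eq (X Y : V) :
    s.tnabla X Y = s.nabla X Y
      + (algebraMap ℝ C (((n : ℝ) - 1) / (2 * ((n : ℝ) + 1)) + 1 / 2) * s.pi1 Y) • X
      + (algebraMap ℝ C (((n : ℝ) - 1) / (2 * ((n : ℝ) + 1)) - 1 / 2) * s.pi1 X) • Y := by
  simp only [tnabla, psi, phi, map_add, map_sub]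
  module

lemma g_sum_left {ι : Type*} (t : Finset ι) (f : ι → V) (W : V) :
    s.g (∑ i ∈ t, f i) W = ∑ i ∈ t, s.g (f i) W := by
  classical
  induction t using Finset.induction_on with
  | empty => simp [s.g_zero_left]
  | insert _ _ h ih => rw [Finset.sum_insert h, s.g_add_left, ih, Finset.sum_insert h]

lemma pi1_sum {ι : Type*} (t : Finset ι) (f : ι → V) :
    s.pi1 (∑ i ∈ t, f i) = ∑ i ∈ t, s.pi1 (f i) := s.g_sum_left t f s.xi

lemma Ric_nb (hpar : ∀ X : V, s.nabla X s.xi = 0) (e : Fin n → V)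
    (horth : ∀ i j, s.g (e i) (e j) = if i = j then 1 else 0)
    (hspan : ∀ v : V, v = ∑ i, s.g v (e i) • e i)
    (a b : ℝ) (nb : V → V → V)
    (hnb : ∀ X Y, nb X Y = s.nabla X Y + (algebraMap ℝ C a * s.pi1 Y) • X
        + (algebraMap ℝ C b * s.pi1 X) • Y) (Y Z : V) :
    s.Ric e nb Y Z = s.Ric e s.nabla Y Z
      + ((algebraMap ℝ C a * algebraMap ℝ C a) * ((n : C) - 1)) * (s.pi1 Y * s.pi1 Z) := by
  have hpiY : ∑ i, s.g Y (e i) * s.pi1 (e i) = s.pi1 Y := by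
    conv_rhs => rw [hspan Y]
    rw [s.pi1_sum]
    exact Finset.sum_congr rfl fun i _ => (s.pi1_smul _ _).symm
  unfold Ric
  have hterm : ∀ i, s.g (s.curv nb (e i) Y Z) (e i)
      = s.g (s.curv s.nabla (e i) Y Z) (e i)
        + (algebraMap ℝ C a * algebraMap ℝ C a) * (s.pi1 Y * s.pi1 Z) * s.g (e i) (e i)
        - (algebraMap ℝ C a * algebraMap ℝ C a) * (s.pi1 (e i) * s.pi1 Z) * (s.g Y (e i)) := by
    intro i
    rw [s.curv_nb hpar a b nb hnb, s.g_sub_left, s.g_add_left, s.g_smul_left, s.g_smul_left]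
  rw [Finset.sum_congr rfl fun i _ => hterm i]
  rw [Finset.sum_sub_distrib, Finset.sum_add_distrib]
  have h1 : ∑ i, (algebraMap ℝ C a * algebraMap ℝ C a) * (s.pi1 Y * s.pi1 Z) * s.g (e i) (e i)
      = (algebraMap ℝ C a * algebraMap ℝ C a) * (s.pi1 Y * s.pi1 Z) * (n : C) := by
    rw [← Finset.mul_sum]
    congr 1
    simp [horth]
  have h2 : ∑ i, (algebraMap ℝ C a * algebraMap ℝ C a) * (s.pi1 (e i) * s.pi1 Z) * s.g Y (e i)
      = (algebraMap ℝ C a * algebraMap ℝ C a) * s.pi1 Z * s.pi1 Y := by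
    rw [← hpiY, Finset.mul_sum]
    exact Finset.sum_congr rfl fun i _ => by ring
  rw [h1, h2]
  ring

end GeomSetup


open GeomSetup

theorem stmt14 {n : ℕ} {C V : Type*} [CommRing C] [Algebra ℝ C]
    [AddCommGroup V] [Module C V] (s : GeomSetup n C V) (hn : 2 < n) (hpar : ∀ X : V, s.nabla X s.xi = 0) (e : Fin n → V)
    (horth : ∀ i j, s.g (e i) (e j) = if i = j then 1 else 0)
    (hspan : ∀ v : V, v = ∑ i, s.g v (e i) • e i) :
    ∀ X Y Z U : V,
      s.g (s.curv s.tnabla X Y Z -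
          algebraMap ℝ C (1 / ((n : ℝ) - 1)) •
            (s.Ric e s.tnabla Y Z • X - s.Ric e s.tnabla X Z • Y)) U =
      s.g (s.curv s.nabla X Y Z -
          algebraMap ℝ C (1 / ((n : ℝ) - 1)) •
            (s.Ric e s.nabla Y Z • X - s.Ric e s.nabla X Z • Y)) U := by
  
  intro X Y Z U
  have hnb : ∀ X Y : V, s.tnabla X Y = s.nabla X Y
      + (algebraMap ℝ C (((n : ℝ) - 1) / (2 * ((n : ℝ) + 1)) + 1 / 2) * s.pi1 Y) • X
      + (algebraMap ℝ C (((n : ℝ) - 1) / (2 * ((n : ℝ) + 1)) - 1 / 2) * s.pi1 X) • Y := fun X Y => s.tnabla_eq X Y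
  have hcurv := s.curv_nb hpar _ _ s.tnabla hnb X Y Z
  have hricYZ := s.Ric_nb hpar e horth hspan _ _ s.tnabla hnb Y Z
  have hricXZ := s.Ric_nb hpar e horth hspan _ _ s.tnabla hnb X Z
  have hk : algebraMap ℝ C (1 / ((n : ℝ) - 1)) * ((n : C) - 1) = 1 := by
    have hne : (n : ℝ) - 1 ≠ 0 := by
      have h2 : (2 : ℝ) < (n : ℝ) := by exact_mod_cast hn
      linarith
    have h1 : ((n : C) - 1) = algebraMap ℝ C ((n : ℝ) - 1) := by
      rw [map_sub, map_natCast, map_one]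
    rw [h1, ← map_mul, one_div, inv_mul_cancel₀ hne, map_one]
  rw [hcurv, hricYZ, hricXZ]
  simp only [smul_sub, smul_smul, s.g_sub_left, s.g_add_left, s.g_smul_left]
  linear_combination (-(algebraMap ℝ C (((n : ℝ) - 1) / (2 * ((n : ℝ) + 1)) + 1 / 2) * algebraMap ℝ C (((n : ℝ) - 1) / (2 * ((n : ℝ) + 1)) + 1 / 2))
    * (s.pi1 Y * s.pi1 Z * s.g X U - s.pi1 X * s.pi1 Z * s.g Y U)) * hk
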